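/- Let α be a composition of n. For every T ∈ SET(α) there exist indices i_1,…,i_r (possibly r = 0) such that successively applying π_{i_1}^{RS*},…,π_{i_r}^{RS*} to S^{col}_α yields T, with every intermediate result lying in SET(α). Consequently S^{col}_α is the unique minimal element of SET(α) under ≼, and SET(α) = {T ∈ SIT(α) : S^{col}_α ≼ T ≼ S^{row}_α}. -/

import Mathlib

open Classical

namespace ImmHecke

/-- A filling assigns a natural-number entry to each cell `(row, column)` (0-indexed);
row `0` is the bottom row.  Cells outside the diagram carry the junk value `0`. -/
abbrev Filling : Type := ℕ × ℕ → ℕ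

/-- `c` is a cell of the diagram of the composition `α` (0-indexed rows and columns;
row `i` has `α_i` cells). -/
def IsCell (α : List ℕ) (c : ℕ × ℕ) : Prop :=
  c.1 < α.length ∧ c.2 < α.getD c.1 0

/-- `α` is a composition of `n`: a list of positive integers summing to `n`. -/
def IsComposition (α : List ℕ) (n : ℕ) : Prop :=
  (∀ a ∈ α, 0 < a) ∧ α.sum = n

/-- `T` is a bijective filling of the diagram of `α` with the entries `1, …, n`
(where `n = α.sum`), and with value `0` off the diagram. -/
def IsStdFilling (α : List ℕ) (T : Filling) : Prop :=
  (∀ c, ¬ IsCell α c → T c = 0) ∧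
  (∀ c, IsCell α c → 1 ≤ T c ∧ T c ≤ α.sum) ∧
  (∀ c c', IsCell α c → IsCell α c' → T c = T c' → c = c') ∧
  (∀ m, 1 ≤ m → m ≤ α.sum → ∃ c, IsCell α c ∧ T c = m)

/-- A standard immaculate tableau of shape `α`: a bijective standard filling whose
first-column entries strictly increase bottom to top and whose rows strictly
increase left to right. -/
def IsSIT (α : List ℕ) (T : Filling) : Prop :=
  IsStdFilling α T ∧
  (∀ i i' : ℕ, IsCell α (i, 0) → IsCell α (i', 0) → i < i' → T (i, 0) < T (i', 0)) ∧
  (∀ i j j' : ℕ, IsCell α (i, j) → IsCell α (i, j') → j < j' → T (i, j) < T (i, j'))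

/-- A standard extended tableau of shape `α`: a bijective standard filling whose rows
strictly increase left to right and all of whose columns strictly increase
bottom to top.  Note `SET(α) ⊆ SIT(α)`. -/
def IsSET (α : List ℕ) (T : Filling) : Prop :=
  IsStdFilling α T ∧
  (∀ i j j' : ℕ, IsCell α (i, j) → IsCell α (i, j') → j < j' → T (i, j) < T (i, j')) ∧
  (∀ i i' j : ℕ, IsCell α (i, j) → IsCell α (i', j) → i < i' → T (i, j) < T (i', j))

/-- `SIT*(α)`: standard immaculate tableaux whose first column contains exactly the
entries `1, 2, …, ℓ(α)`. -/
def IsSITstar (α : List ℕ) (T : Filling) : Prop :=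
  IsSIT α T ∧
  (∀ i, IsCell α (i, 0) → 1 ≤ T (i, 0) ∧ T (i, 0) ≤ α.length) ∧
  (∀ m, 1 ≤ m → m ≤ α.length → ∃ i, IsCell α (i, 0) ∧ T (i, 0) = m)

/-- In `T`, the entry `m+1` lies in a row strictly above the row of `m`. -/
def SuccAbove (α : List ℕ) (T : Filling) (m : ℕ) : Prop :=
  ∃ c c', IsCell α c ∧ IsCell α c' ∧ T c = m ∧ T c' = m + 1 ∧ c.1 < c'.1

/-- In `T`, the entries `m` and `m+1` lie in the same row. -/
def SuccSameRow (α : List ℕ) (T : Filling) (m : ℕ) : Prop :=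
  ∃ c c', IsCell α c ∧ IsCell α c' ∧ T c = m ∧ T c' = m + 1 ∧ c.1 = c'.1

/-- In `T`, the entry `m+1` lies in a row strictly below the row of `m`. -/
def SuccBelow (α : List ℕ) (T : Filling) (m : ℕ) : Prop :=
  ∃ c c', IsCell α c ∧ IsCell α c' ∧ T c = m ∧ T c' = m + 1 ∧ c'.1 < c.1

/-- In `T`, the entries `m` and `m+1` are both in the first column. -/
def BothFirstColumn (α : List ℕ) (T : Filling) (m : ℕ) : Prop :=
  ∃ c c', IsCell α c ∧ IsCell α c' ∧ T c = m ∧ T c' = m + 1 ∧ c.2 = 0 ∧ c'.2 = 0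

/-- `s_i(T)`: exchange the entries `i` and `i+1` of `T`. -/
def swapEntries (i : ℕ) (T : Filling) : Filling :=
  fun c => if T c = i then i + 1 else if T c = i + 1 then i else T c

/-- The row-strict dual immaculate 0-Hecke operator `π_i^{RS*}` on `SIT(α) ∪ {0}`
(`0` is encoded as `none`): `π_i(T) = T` if `i+1` is strictly above `i`;
`π_i(T) = 0` if `i` and `i+1` are in the same row; `π_i(T) = s_i(T)` if `i+1` is
strictly below `i`. -/
noncomputable def piRS (α : List ℕ) (i : ℕ) : Option Filling → Option Filling
  | none => none
  | some T =>
    if SuccAbove α T i then some T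
    else if SuccSameRow α T i then none
    else some (swapEntries i T)

/-- The dual immaculate 0-Hecke operator `π_i^{S*}` on `SIT(α) ∪ {0}`:
`π_i(T) = T` if `i+1` is in a row weakly below `i`; `π_i(T) = 0` if `i` and `i+1`
are both in the first column; `π_i(T) = s_i(T)` if `i+1` is strictly above `i`
and `i, i+1` are not both in the first column. -/
noncomputable def piS (α : List ℕ) (i : ℕ) : Option Filling → Option Filling
  | none => none
  | some T =>
    if SuccSameRow α T i ∨ SuccBelow α T i then some T
    else if BothFirstColumn α T i then none
    else some (swapEntries i T)

/-- The 0-Hecke operator `π_i^{A*}` on `SIT(α)`: `π_i(T) = T` if `i+1` is strictly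
above `i` or in the same row as `i`; `π_i(T) = s_i(T)` if `i+1` is strictly below `i`. -/
noncomputable def piA (α : List ℕ) (i : ℕ) (T : Filling) : Filling :=
  if SuccBelow α T i then swapEntries i T else T

/-- The 0-Hecke operator `π_i^{Ā*}` on `SIT(α) ∪ {0}`: `π_i(T) = T` if `i+1` is
strictly below `i`; `π_i(T) = 0` if `i` and `i+1` are in the same row or both in
the first column; `π_i(T) = s_i(T)` if `i+1` is strictly above `i` and `i, i+1`
are not both in the first column. -/
noncomputable def piAbar (α : List ℕ) (i : ℕ) : Option Filling → Option Filling
  | none => none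
  | some T =>
    if SuccBelow α T i then some T
    else if SuccSameRow α T i ∨ BothFirstColumn α T i then none
    else some (swapEntries i T)

/-- `x` belongs to `SIT(α) ∪ {0}` (with `0 = none`). -/
def InSITZ (α : List ℕ) (x : Option Filling) : Prop :=
  ∀ T, x = some T → IsSIT α T

/-- Successively apply the operators `π_{i_1}^{RS*}, …, π_{i_r}^{RS*}` (the list `l = [i_1, …, i_r]`). -/
noncomputable def applySeqRS (α : List ℕ) (l : List ℕ) (x : Option Filling) : Option Filling :=
  l.foldl (fun y i => piRS α i y) x

/-- Successively apply the operators `π_{i_1}^{S*}, …, π_{i_r}^{S*}`. -/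
noncomputable def applySeqS (α : List ℕ) (l : List ℕ) (x : Option Filling) : Option Filling :=
  l.foldl (fun y i => piS α i y) x

/-- The relation `T₁ ≼ T₂` on `SIT(α)`: some sequence of operators `π_i^{RS*}`
(indices in `{1, …, n-1}`, possibly empty) sends `T₁` to `T₂`. -/
def preRS (α : List ℕ) (T₁ T₂ : Filling) : Prop :=
  ∃ l : List ℕ, (∀ i ∈ l, 1 ≤ i ∧ i ≤ α.sum - 1) ∧ applySeqRS α l (some T₁) = some T₂

/-- The one-line notation of `σ(T)`: read the entries of `T` from right to left in
each row, rows from top to bottom. -/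
def readingWord (α : List ℕ) (T : Filling) : List ℕ :=
  ((List.range α.length).reverse).flatMap
    (fun i => ((List.range (α.getD i 0)).map fun j => T (i, j)).reverse)

/-- The number of inversions of a word `w`: pairs of positions `p < q` with `w p > w q`. -/
def inversions (w : List ℕ) : ℕ :=
  ((Finset.range w.length ×ˢ Finset.range w.length).filter
    (fun pq : ℕ × ℕ => pq.1 < pq.2 ∧ w.getD pq.2 0 < w.getD pq.1 0)).card

/-- `S⁰_α`: first column contains `1, …, ℓ` bottom to top; the remaining cells are
filled with `ℓ+1, …, n` consecutively, reading rows from top to bottom and left to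
right within each row. -/
noncomputable def S0 (α : List ℕ) : Filling := fun c =>
  if IsCell α c then
    if c.2 = 0 then c.1 + 1
    else
      α.length + (((List.range α.length).filter fun r => c.1 < r).map fun r => α.getD r 0 - 1).sum + c.2
  else 0

/-- `S^{row}_α`: the row superstandard tableau, entries `1, …, n` placed consecutively
reading rows bottom to top, left to right within each row. -/
noncomputable def Srow (α : List ℕ) : Filling := fun c =>
  if IsCell α c then (α.take c.1).sum + c.2 + 1 else 0

/-- `S^{row*}_α`: first column contains `1, …, ℓ` bottom to top; the remaining cells
are filled with `ℓ+1, …, n` consecutively, reading rows bottom to top, left to right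
within each row. -/
noncomputable def SrowStar (α : List ℕ) : Filling := fun c =>
  if IsCell α c then
    if c.2 = 0 then c.1 + 1
    else α.length + ((List.range c.1).map fun r => α.getD r 0 - 1).sum + c.2
  else 0

/-- `S^{col}_α`: the column superstandard tableau, entries `1, …, n` placed
consecutively reading columns bottom to top, columns left to right. -/
noncomputable def Scol (α : List ℕ) : Filling := fun c =>
  if IsCell α c then
    ((List.range c.2).map fun j' =>
        ((List.range α.length).filter fun r => j' < α.getD r 0).length).sum
      + ((List.range c.1).filter fun r => c.2 < α.getD r 0).length + 1
  else 0

/-- The image of a basis element of `V_α` under the linearly extended operator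
`π_i^{RS*}` (the value `0` of the operator is interpreted as the zero vector). -/
noncomputable def piTargetRS (α : List ℕ) (i : ℕ) (T : {T : Filling // IsSIT α T}) :
    ({T : Filling // IsSIT α T} →₀ ℚ) :=
  match piRS α i (some T.val) with
  | none => 0
  | some T' => if h : IsSIT α T' then Finsupp.single ⟨T', h⟩ 1 else 0

/-- The operator `π_i^{RS*}` extended to a `ℚ`-linear endomorphism of the free
`ℚ`-vector space `V_α` with basis `SIT(α)`. -/
noncomputable def piRSLin (α : List ℕ) (i : ℕ) :
    ({T : Filling // IsSIT α T} →₀ ℚ) →ₗ[ℚ] ({T : Filling // IsSIT α T} →₀ ℚ) :=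
  Finsupp.lsum ℚ fun T => LinearMap.toSpanSingleton ℚ _ (piTargetRS α i T)

/-- The image of a basis element of `Z_α` under the linearly extended operator
`π_i^{RS*}`. -/
noncomputable def piTargetSET (α : List ℕ) (i : ℕ) (T : {T : Filling // IsSET α T}) :
    ({T : Filling // IsSET α T} →₀ ℚ) :=
  match piRS α i (some T.val) with
  | none => 0
  | some T' => if h : IsSET α T' then Finsupp.single ⟨T', h⟩ 1 else 0

/-- The operator `π_i^{RS*}` extended to a `ℚ`-linear endomorphism of the free
`ℚ`-vector space `Z_α` with basis `SET(α)`. -/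
noncomputable def piRSLinSET (α : List ℕ) (i : ℕ) :
    ({T : Filling // IsSET α T} →₀ ℚ) →ₗ[ℚ] ({T : Filling // IsSET α T} →₀ ℚ) :=
  Finsupp.lsum ℚ fun T => LinearMap.toSpanSingleton ℚ _ (piTargetSET α i T)

/-!
If a standard extended tableau `T` differs from `Scol α`, some pair of consecutive entries
`m, m + 1` is out of column reading order, and since rows and columns of `T` increase this forces
`m + 1` to lie strictly above and strictly left of `m`. Swapping them gives a tableau `T'` that is
still in `SET(α)`, satisfies `π_m(T') = T`, and is closer to `Scol α`: the pairing
`∑_c T'(c) · Scol(c)` is strictly larger. As the pairing is bounded, descending from `T` reaches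
`Scol α`. Dually, if `T ≠ Srow α` some `m + 1` lies strictly below `m`, and `π_m(T)` is an SET
with larger pairing against `Srow α`. Conversely `π_i` sends an SET to an SET or to `0`: it only
swaps `i` and `i + 1` when they lie in different rows, and then in an SET they lie in different
columns.
-/

open Finset Relation

variable {α : List ℕ} {T U : Filling}

def cells (α : List ℕ) : Finset (ℕ × ℕ) :=
  (range α.length).biUnion fun i => {i} ×ˢ range (α.getD i 0)

lemma mem_cells {c : ℕ × ℕ} : c ∈ cells α ↔ IsCell α c := by
  obtain ⟨i, j⟩ := c
  simp [cells, IsCell]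

lemma card_cells : #(cells α) = α.sum := by
  rw [cells, card_biUnion]
  · simp [Finset.sum_range, List.getD_eq_getElem?_getD]
  · intro i _ i' _ hii'
    refine disjoint_left.2 fun c hc hc' => hii' ?_
    simp only [mem_product, mem_singleton] at hc hc'
    exact hc.1.symm.trans hc'.1

namespace IsStdFilling

variable {c : ℕ × ℕ}

lemma one_le (hT : IsStdFilling α T) (hc : IsCell α c) : 1 ≤ T c := (hT.2.1 c hc).1

lemma le_sum (hT : IsStdFilling α T) (hc : IsCell α c) : T c ≤ α.sum := (hT.2.1 c hc).2

lemma inj (hT : IsStdFilling α T) {a b : ℕ × ℕ} (ha : IsCell α a) (hb : IsCell α b)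
    (hab : T a = T b) : a = b :=
  hT.2.2.1 a b ha hb hab

lemma exists_apply_eq (hT : IsStdFilling α T) {m : ℕ} (hm : 1 ≤ m) (hm' : m ≤ α.sum) :
    ∃ c, IsCell α c ∧ T c = m :=
  hT.2.2.2 m hm hm'

lemma card_filter_lt (hT : IsStdFilling α T) (hc : IsCell α c) :
    #{c' ∈ cells α | T c' < T c} = T c - 1 := by
  obtain ⟨-, hbound, hinj, hsurj⟩ := hT
  rw [← Nat.card_Ico 1 (T c)]
  refine card_nbij T (fun c' hc' => ?_) (fun a ha b hb hab => ?_) (fun m hm => ?_)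
  · simp only [coe_filter, mem_cells, Set.mem_ofPred_eq] at hc'
    simp only [coe_Ico, Set.mem_Ico]
    exact ⟨(hbound c' hc'.1).1, hc'.2⟩
  · simp only [coe_filter, mem_cells, Set.mem_ofPred_eq] at ha hb
    exact hinj a b ha.1 hb.1 hab
  · simp only [coe_Ico, Set.mem_Ico] at hm
    obtain ⟨c', hc', rfl⟩ := hsurj m hm.1 (by have := hbound c hc; omega)
    exact ⟨c', by simp [mem_cells, hc', hm.2], rfl⟩

lemma eq_of_lt_imp_lt (hT : IsStdFilling α T) (hU : IsStdFilling α U)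
    (h : ∀ a b, IsCell α a → IsCell α b → T a < T b → U a < U b) : T = U := by
  funext c
  by_cases hc : IsCell α c
  · have hsame : #{c' ∈ cells α | T c' < T c} = #{c' ∈ cells α | U c' < U c} := by
      refine congrArg card (filter_congr fun c' hc' => ⟨h c' c (mem_cells.1 hc') hc, ?_⟩)
      intro hU'
      rcases lt_trichotomy (T c') (T c) with hlt | heq | hgt
      · exact hlt
      · rw [hT.inj (mem_cells.1 hc') hc heq] at hU'
        exact absurd hU' (lt_irrefl _)
      · exact absurd (h c c' hc (mem_cells.1 hc') hgt) hU'.not_gt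
    rw [hT.card_filter_lt hc, hU.card_filter_lt hc] at hsame
    have := hT.one_le hc
    have := hU.one_le hc
    omega
  · rw [hT.1 c hc, hU.1 c hc]

lemma lt_imp_lt_of_succ (hT : IsStdFilling α T)
    (h : ∀ a b, IsCell α a → IsCell α b → T b = T a + 1 → U a < U b) :
    ∀ a b, IsCell α a → IsCell α b → T a < T b → U a < U b := by
  suffices hgap : ∀ k a b, IsCell α a → IsCell α b → T b = T a + k + 1 → U a < U b from
    fun a b ha hb hab => hgap (T b - T a - 1) a b ha hb (by omega)
  intro k
  induction k with
  | zero => exact fun a b ha hb hab => h a b ha hb hab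
  | succ k ih =>
    intro a b ha hb hab
    obtain ⟨w, hw, hTw⟩ := hT.exists_apply_eq (m := T a + k + 1) (by omega)
      (by have := hT.le_sum hb; omega)
    exact (ih a w ha hw hTw).trans (h w b hw hb (by omega))

lemma eq_of_succ_lt (hT : IsStdFilling α T) (hU : IsStdFilling α U)
    (h : ∀ a b, IsCell α a → IsCell α b → T b = T a + 1 → U a < U b) : T = U :=
  hT.eq_of_lt_imp_lt hU (hT.lt_imp_lt_of_succ h)

end IsStdFilling

lemma isStdFilling_of_lt_imp_lt {β : Type*} [LinearOrder β] (key : ℕ × ℕ → β)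
    (hkey : Function.Injective key) (hzero : ∀ c, ¬ IsCell α c → T c = 0)
    (hbound : ∀ c, IsCell α c → 1 ≤ T c ∧ T c ≤ α.sum)
    (hmono : ∀ a b, IsCell α a → IsCell α b → key a < key b → T a < T b) :
    IsStdFilling α T := by
  have hinj : ∀ a b, IsCell α a → IsCell α b → T a = T b → a = b := by
    intro a b ha hb hab
    by_contra hne
    rcases (hkey.ne hne).lt_or_gt with h | h
    · exact (hmono a b ha hb h).ne hab
    · exact (hmono b a hb ha h).ne hab.symm
  refine ⟨hzero, hbound, hinj, fun m hm hm' => ?_⟩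
  obtain ⟨c, hc, hcm⟩ := surj_on_of_inj_on_of_card_le (s := cells α) (t := Icc 1 α.sum)
    (fun c _ => T c) (fun c hc => mem_Icc.2 (hbound c (mem_cells.1 hc)))
    (fun a b ha hb => hinj a b (mem_cells.1 ha) (mem_cells.1 hb))
    (by rw [card_cells, Nat.card_Icc]; omega) m (mem_Icc.2 ⟨hm, hm'⟩)
  exact ⟨c, mem_cells.1 hc, hcm.symm⟩

lemma swapEntries_eq_comp (i : ℕ) (T : Filling) :
    swapEntries i T = Equiv.swap i (i + 1) ∘ T := by
  funext c
  simp [swapEntries, Equiv.swap_apply_def]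

lemma swapEntries_swapEntries (i : ℕ) (T : Filling) : swapEntries i (swapEntries i T) = T := by
  funext c
  simp [swapEntries_eq_comp]

lemma swap_succ_lt_swap_succ {m x y : ℕ} (hxy : x < y) (h : ¬(x = m ∧ y = m + 1)) :
    Equiv.swap m (m + 1) x < Equiv.swap m (m + 1) y := by
  simp only [Equiv.swap_apply_def]
  split_ifs <;> omega

lemma IsStdFilling.swapEntries (hT : IsStdFilling α T) {m : ℕ} (hm : 1 ≤ m)
    (hm' : m + 1 ≤ α.sum) : IsStdFilling α (swapEntries m T) := by
  obtain ⟨hzero, hbound, hinj, hsurj⟩ := hT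
  rw [swapEntries_eq_comp]
  refine ⟨fun c hc => ?_, fun c hc => ?_,
    fun a b ha hb hab => hinj a b ha hb (Equiv.injective _ hab), fun v hv hv' => ?_⟩
  · simp only [Function.comp_apply, hzero c hc]
    exact Equiv.swap_apply_of_ne_of_ne (by omega) (by omega)
  · have := hbound c hc
    simp only [Function.comp_apply, Equiv.swap_apply_def]
    split_ifs <;> omega
  · obtain ⟨c, hc, hcv⟩ := hsurj (Equiv.swap m (m + 1) v)
      (by rw [Equiv.swap_apply_def]; split_ifs <;> omega)
      (by rw [Equiv.swap_apply_def]; split_ifs <;> omega)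
    exact ⟨c, hc, by simp [hcv]⟩

namespace IsSET

lemma lt_of_le_of_le (hT : IsSET α T) {a b : ℕ × ℕ} (ha : IsCell α a) (hb : IsCell α b)
    (hrow : a.1 ≤ b.1) (hcol : a.2 ≤ b.2) (hne : a ≠ b) : T a < T b := by
  obtain ⟨-, hrows, hcols⟩ := hT
  obtain ⟨a1, a2⟩ := a
  obtain ⟨b1, b2⟩ := b
  have hcorner : IsCell α (b1, a2) := ⟨hb.1, hcol.trans_lt hb.2⟩
  rcases hrow.lt_or_eq with hrow | rfl <;> rcases hcol.lt_or_eq with hcol | rfl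
  · exact (hcols a1 b1 a2 ha hcorner hrow).trans (hrows b1 a2 b2 hcorner hb hcol)
  · exact hcols a1 b1 a2 ha hb hrow
  · exact hrows a1 a2 b2 ha hb hcol
  · exact absurd rfl hne

lemma swapEntries (hT : IsSET α T) {a b : ℕ × ℕ} (ha : IsCell α a) (hb : IsCell α b)
    (hab : T b = T a + 1) (hrow : a.1 ≠ b.1) (hcol : a.2 ≠ b.2) :
    IsSET α (swapEntries (T a) T) := by
  obtain ⟨hstd, hrows, hcols⟩ := hT
  have hpair : ∀ c c', IsCell α c → IsCell α c' → T c = T a → T c' = T a + 1 →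
      c = a ∧ c' = b :=
    fun c c' hc hc' h h' => ⟨hstd.inj hc ha h, hstd.inj hc' hb (h'.trans hab.symm)⟩
  refine ⟨hstd.swapEntries (hstd.one_le ha) (hab ▸ hstd.le_sum hb), ?_, ?_⟩
  · intro i j j' hc hc' hjj'
    rw [swapEntries_eq_comp]
    refine swap_succ_lt_swap_succ (hrows i j j' hc hc' hjj') fun ⟨h, h'⟩ => hrow ?_
    obtain ⟨rfl, rfl⟩ := hpair _ _ hc hc' h h'
    rfl
  · intro i i' j hc hc' hii'
    rw [swapEntries_eq_comp]
    refine swap_succ_lt_swap_succ (hcols i i' j hc hc' hii') fun ⟨h, h'⟩ => hcol ?_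
    obtain ⟨rfl, rfl⟩ := hpair _ _ hc hc' h h'
    rfl

lemma swapEntries_of_fst_lt (hT : IsSET α T) {a b : ℕ × ℕ} (ha : IsCell α a)
    (hb : IsCell α b) (hab : T b = T a + 1) (hba : b.1 < a.1) :
    IsSET α (ImmHecke.swapEntries (T a) T) :=
  hT.swapEntries ha hb hab hba.ne' fun hcol => by
    have := hT.lt_of_le_of_le hb ha hba.le hcol.ge (by rintro rfl; omega)
    omega

end IsSET

def colLength (α : List ℕ) (j : ℕ) : ℕ := #{r ∈ range α.length | j < α.getD r 0}

lemma Scol_apply {c : ℕ × ℕ} (hc : IsCell α c) :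
    Scol α c =
      ∑ j ∈ range c.2, colLength α j + #{r ∈ range c.1 | c.2 < α.getD r 0} + 1 := by
  rw [Scol, if_pos hc]
  -- the `List.range` sums and filters in `Scol` unfold to these `Finset` ones
  rfl

lemma card_filter_range_lt_card_filter_range {p : ℕ → Prop} [DecidablePred p] {a b : ℕ}
    (hab : a < b) (ha : p a) : #{r ∈ range a | p r} < #{r ∈ range b | p r} := by
  refine card_lt_card ⟨filter_subset_filter _ (range_subset_range.2 hab.le), fun h => ?_⟩
  simpa using h (mem_filter.2 ⟨mem_range.2 hab, ha⟩)

lemma sum_colLength {N : ℕ} (hN : ∀ r < α.length, α.getD r 0 ≤ N) :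
    ∑ j ∈ range N, colLength α j = α.sum := by
  have hrows : ∑ r ∈ range α.length, α.getD r 0 = α.sum := by
    simp [Finset.sum_range, List.getD_eq_getElem?_getD]
  simp only [colLength, card_filter]
  rw [sum_comm, ← hrows]
  refine sum_congr rfl fun r hr => ?_
  rw [← card_filter]
  convert card_range (α.getD r 0) using 2
  ext j
  simp only [mem_filter, mem_range]
  have := hN r (mem_range.1 hr)
  omega

lemma Scol_lt_Scol {c c' : ℕ × ℕ} (hc : IsCell α c) (hc' : IsCell α c')
    (h : toLex (c.2, c.1) < toLex (c'.2, c'.1)) : Scol α c < Scol α c' := by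
  rw [Scol_apply hc, Scol_apply hc']
  rcases Prod.Lex.toLex_lt_toLex.1 h with h | ⟨h1, h2⟩
  · have hcol : #{r ∈ range c.1 | c.2 < α.getD r 0} < colLength α c.2 :=
      card_filter_range_lt_card_filter_range hc.1 hc.2
    have hsum :
        ∑ j ∈ range (c.2 + 1), colLength α j ≤ ∑ j ∈ range c'.2, colLength α j :=
      sum_le_sum_of_subset (range_subset_range.2 h)
    rw [sum_range_succ] at hsum
    omega
  · obtain ⟨i, j⟩ := c
    obtain ⟨i', j'⟩ := c'
    simp only at h1 h2 ⊢
    subst h1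
    have : #{r ∈ range i | j < α.getD r 0} < #{r ∈ range i' | j < α.getD r 0} :=
      card_filter_range_lt_card_filter_range h2 hc.2
    omega

lemma Scol_le_sum {c : ℕ × ℕ} (hc : IsCell α c) : Scol α c ≤ α.sum := by
  have hle : ∀ r < α.length, α.getD r 0 ≤ α.sum := fun r hr => by
    rw [List.getD_eq_getElem _ _ hr]
    exact List.le_sum_of_mem (List.getElem_mem hr)
  have hcol : #{r ∈ range c.1 | c.2 < α.getD r 0} < colLength α c.2 :=
    card_filter_range_lt_card_filter_range hc.1 hc.2
  have hsum :
      ∑ j ∈ range (c.2 + 1), colLength α j ≤ ∑ j ∈ range α.sum, colLength α j :=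
    sum_le_sum_of_subset (range_subset_range.2 (hc.2.trans_le (hle _ hc.1)))
  rw [sum_range_succ, sum_colLength hle] at hsum
  rw [Scol_apply hc]
  omega

lemma isSET_Scol (α : List ℕ) : IsSET α (Scol α) := by
  have hmono : ∀ a b, IsCell α a → IsCell α b → toLex (a.2, a.1) < toLex (b.2, b.1) →
      Scol α a < Scol α b := fun a b => Scol_lt_Scol
  refine ⟨isStdFilling_of_lt_imp_lt (fun c => toLex (c.2, c.1))
    (toLex.injective.comp Prod.swap_injective) (fun c hc => if_neg hc)
    (fun c hc => ⟨by rw [Scol_apply hc]; omega, Scol_le_sum hc⟩) hmono, ?_, ?_⟩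
  · exact fun i j j' hc hc' h => hmono _ _ hc hc' (Prod.Lex.toLex_lt_toLex.2 (Or.inl h))
  · exact fun i i' j hc hc' h => hmono _ _ hc hc' (Prod.Lex.toLex_lt_toLex.2 (Or.inr ⟨rfl, h⟩))

lemma Srow_apply {c : ℕ × ℕ} (hc : IsCell α c) : Srow α c = (α.take c.1).sum + c.2 + 1 :=
  if_pos hc

lemma Srow_le_sum_take_succ {c : ℕ × ℕ} (hc : IsCell α c) :
    Srow α c ≤ (α.take (c.1 + 1)).sum := by
  rw [Srow_apply hc, List.sum_take_succ _ _ hc.1]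
  have := hc.2
  rw [List.getD_eq_getElem _ _ hc.1] at this
  omega

lemma Srow_lt_Srow {c c' : ℕ × ℕ} (hc : IsCell α c) (hc' : IsCell α c')
    (h : toLex c < toLex c') : Srow α c < Srow α c' := by
  rcases Prod.Lex.toLex_lt_toLex.1 h with h | ⟨h1, h2⟩
  · have : (α.take (c.1 + 1)).sum ≤ (α.take c'.1).sum := List.monotone_sum_take α h
    have := Srow_le_sum_take_succ hc
    rw [Srow_apply hc']
    omega
  · rw [Srow_apply hc, Srow_apply hc', h1]
    omega

lemma isStdFilling_Srow (α : List ℕ) : IsStdFilling α (Srow α) := by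
  refine isStdFilling_of_lt_imp_lt toLex toLex.injective (fun c hc => if_neg hc)
    (fun c hc => ⟨by rw [Srow_apply hc]; omega, ?_⟩) (fun a b => Srow_lt_Srow)
  have : (α.take (c.1 + 1)).sum ≤ (α.take α.length).sum := List.monotone_sum_take α hc.1
  rw [List.take_length] at this
  exact (Srow_le_sum_take_succ hc).trans this

def pairing (α : List ℕ) (R T : Filling) : ℕ := ∑ c ∈ cells α, T c * R c

lemma pairing_le (hT : IsStdFilling α T) (R : Filling) :
    pairing α R T ≤ ∑ c ∈ cells α, α.sum * R c :=
  sum_le_sum fun _ hc => Nat.mul_le_mul_right _ (hT.le_sum (mem_cells.1 hc))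

lemma pairing_lt_pairing_swapEntries (hT : IsStdFilling α T) {R : Filling} {a b : ℕ × ℕ}
    (ha : IsCell α a) (hb : IsCell α b) (hab : T b = T a + 1) (hR : R b < R a) :
    pairing α R T < pairing α R (swapEntries (T a) T) := by
  have hne : a ≠ b := by rintro rfl; omega
  have hsub : {a, b} ⊆ cells α := by simp [insert_subset_iff, mem_cells, ha, hb]
  have hsplit : ∀ V : Filling, pairing α R V
      = ∑ c ∈ cells α \ {a, b}, V c * R c + (V a * R a + V b * R b) := fun V => by
    rw [pairing, ← sum_sdiff hsub, sum_pair hne]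
  have hrest : ∑ c ∈ cells α \ {a, b}, swapEntries (T a) T c * R c
      = ∑ c ∈ cells α \ {a, b}, T c * R c := by
    refine sum_congr rfl fun c hc => ?_
    simp only [mem_sdiff, mem_insert, mem_singleton, not_or, mem_cells] at hc
    obtain ⟨hc, hca, hcb⟩ := hc
    have h1 : T c ≠ T a := fun h => hca (hT.inj hc ha h)
    have h2 : T c ≠ T a + 1 := fun h => hcb (hT.inj hc hb (h.trans hab.symm))
    rw [swapEntries_eq_comp, Function.comp_apply, Equiv.swap_apply_of_ne_of_ne h1 h2]
  rw [hsplit, hsplit, hrest, swapEntries_eq_comp]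
  simp only [Function.comp_apply, Equiv.swap_apply_left, hab, Equiv.swap_apply_right]
  nlinarith

namespace IsSET

lemma eq_Scol_of_forall_succ (hT : IsSET α T)
    (h : ∀ a b, IsCell α a → IsCell α b → T b = T a + 1 → ¬(a.1 < b.1 ∧ b.2 < a.2)) :
    T = Scol α := by
  refine hT.1.eq_of_succ_lt (isSET_Scol α).1 fun a b ha hb hab => Scol_lt_Scol ha hb ?_
  rw [Prod.Lex.toLex_lt_toLex]
  by_contra hba
  have hba : b.1 ≤ a.1 ∧ b.2 ≤ a.2 := by
    have := h a b ha hb hab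
    simp only at hba
    omega
  have := hT.lt_of_le_of_le hb ha hba.1 hba.2 (by rintro rfl; omega)
  omega

lemma eq_Srow_of_forall_succ (hT : IsSET α T)
    (h : ∀ a b, IsCell α a → IsCell α b → T b = T a + 1 → a.1 ≤ b.1) : T = Srow α := by
  refine hT.1.eq_of_succ_lt (isStdFilling_Srow α) fun a b ha hb hab => Srow_lt_Srow ha hb ?_
  rw [Prod.Lex.toLex_lt_toLex]
  by_contra hba
  have hba : b.1 ≤ a.1 ∧ b.2 ≤ a.2 := by
    have := h a b ha hb hab
    omega
  have := hT.lt_of_le_of_le hb ha hba.1 hba.2 (by rintro rfl; omega)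
  omega

end IsSET

def RSStep (α : List ℕ) (T U : Filling) : Prop :=
  ∃ i, (1 ≤ i ∧ i ≤ α.sum - 1) ∧ piRS α i (some T) = some U

lemma IsStdFilling.succAbove_iff (hT : IsStdFilling α T) {a b : ℕ × ℕ} (ha : IsCell α a)
    (hb : IsCell α b) (hab : T b = T a + 1) : SuccAbove α T (T a) ↔ a.1 < b.1 := by
  refine ⟨fun ⟨c, c', hc, hc', h, h', hlt⟩ => ?_, (⟨a, b, ha, hb, rfl, hab, ·⟩)⟩
  rwa [hT.inj hc ha h, hT.inj hc' hb (h'.trans hab.symm)] at hlt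

lemma IsStdFilling.succSameRow_iff (hT : IsStdFilling α T) {a b : ℕ × ℕ} (ha : IsCell α a)
    (hb : IsCell α b) (hab : T b = T a + 1) : SuccSameRow α T (T a) ↔ a.1 = b.1 := by
  refine ⟨fun ⟨c, c', hc, hc', h, h', heq⟩ => ?_, (⟨a, b, ha, hb, rfl, hab, ·⟩)⟩
  rwa [hT.inj hc ha h, hT.inj hc' hb (h'.trans hab.symm)] at heq

lemma piRS_some_eq_swapEntries (hT : IsStdFilling α T) {a b : ℕ × ℕ} (ha : IsCell α a)
    (hb : IsCell α b) (hab : T b = T a + 1) (hba : b.1 < a.1) :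
    piRS α (T a) (some T) = some (swapEntries (T a) T) := by
  simp only [piRS, hT.succAbove_iff ha hb hab, hT.succSameRow_iff ha hb hab]
  rw [if_neg (by omega), if_neg (by omega)]

lemma rsStep_swapEntries (hT : IsStdFilling α T) {a b : ℕ × ℕ} (ha : IsCell α a)
    (hb : IsCell α b) (hab : T b = T a + 1) (hba : b.1 < a.1) :
    RSStep α T (swapEntries (T a) T) :=
  ⟨T a, ⟨hT.one_le ha, by have := hT.le_sum hb; omega⟩,
    piRS_some_eq_swapEntries hT ha hb hab hba⟩

lemma IsSET.of_piRS_eq_some (hT : IsSET α T) {i : ℕ} (hi : 1 ≤ i ∧ i ≤ α.sum - 1)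
    (h : piRS α i (some T) = some U) : IsSET α U := by
  obtain ⟨a, ha, rfl⟩ := hT.1.exists_apply_eq hi.1 (by omega)
  obtain ⟨b, hb, hab⟩ := hT.1.exists_apply_eq (m := T a + 1) (by omega) (by omega)
  simp only [piRS, hT.1.succAbove_iff ha hb hab, hT.1.succSameRow_iff ha hb hab] at h
  split_ifs at h
  · exact Option.some.inj h ▸ hT
  · exact Option.some.inj h ▸ hT.swapEntries_of_fst_lt ha hb hab (by omega)

lemma applySeqRS_append (l₁ l₂ : List ℕ) (x : Option Filling) :
    applySeqRS α (l₁ ++ l₂) x = applySeqRS α l₂ (applySeqRS α l₁ x) :=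
  List.foldl_append

lemma applySeqRS_none (l : List ℕ) : applySeqRS α l none = none := by
  induction l with
  | nil => rfl
  | cons i l ih => exact ih

lemma applySeqRS_take_eq_some {l : List ℕ} {x : Option Filling} (h : applySeqRS α l x = some U)
    (k : ℕ) : ∃ T', applySeqRS α (l.take k) x = some T' := by
  rw [← List.take_append_drop k l, applySeqRS_append] at h
  rcases hk : applySeqRS α (l.take k) x with _ | T'
  · rw [hk, applySeqRS_none] at h
    cases h
  · exact ⟨T', rfl⟩

lemma IsSET.of_applySeqRS (hT : IsSET α T) {l : List ℕ}
    (hl : ∀ i ∈ l, 1 ≤ i ∧ i ≤ α.sum - 1) (h : applySeqRS α l (some T) = some U) :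
    IsSET α U := by
  induction l using List.reverseRecOn generalizing U with
  | nil => exact Option.some.inj h ▸ hT
  | append_singleton l i ih =>
    rw [applySeqRS_append] at h
    rcases hl' : applySeqRS α l (some T) with _ | T'
    · rw [hl', applySeqRS_none] at h
      cases h
    · rw [hl'] at h
      exact (ih (fun j hj => hl j (List.mem_append_left _ hj)) hl').of_piRS_eq_some
        (hl i (by simp)) h

lemma preRS_of_reflTransGen (h : ReflTransGen (RSStep α) T U) : preRS α T U := by
  induction h with
  | refl => exact ⟨[], by simp, rfl⟩
  | tail _ hstep ih =>
    obtain ⟨l, hl, hlT⟩ := ih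
    obtain ⟨i, hi, hiU⟩ := hstep
    refine ⟨l ++ [i], fun j hj => ?_, by rw [applySeqRS_append, hlT]; exact hiU⟩
    rcases List.mem_append.1 hj with hj | hj
    · exact hl j hj
    · exact List.mem_singleton.1 hj ▸ hi

lemma reflTransGen_of_bounded_potential {X : Type*} {r : X → X → Prop} {p : X → Prop} {t : X}
    (f : X → ℕ) (B : ℕ) (hB : ∀ x, p x → f x ≤ B)
    (hstep : ∀ x, p x → x ≠ t → ∃ y, p y ∧ f x < f y ∧ r y x) {x : X} (hx : p x) :
    ReflTransGen r t x := by
  induction hd : B - f x using Nat.strong_induction_on generalizing x with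
  | _ d ih =>
    by_cases hxt : x = t
    · exact hxt ▸ ReflTransGen.refl
    obtain ⟨y, hy, hxy, hyx⟩ := hstep x hx hxt
    have := hB y hy
    exact (ih (B - f y) (by omega) hy rfl).tail hyx

namespace IsSET

lemma exists_RSStep_of_ne_Scol (hT : IsSET α T) (hne : T ≠ Scol α) :
    ∃ U, IsSET α U ∧ pairing α (Scol α) T < pairing α (Scol α) U ∧ RSStep α U T := by
  obtain ⟨a, b, ha, hb, hab, hrow, hcol⟩ :
      ∃ a b, IsCell α a ∧ IsCell α b ∧ T b = T a + 1 ∧ a.1 < b.1 ∧ b.2 < a.2 := by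
    by_contra! h
    exact hne (hT.eq_Scol_of_forall_succ fun a b ha hb hab ⟨h1, h2⟩ =>
      (h a b ha hb hab h1).not_gt h2)
  set U := ImmHecke.swapEntries (T a) T
  have hU : IsSET α U := hT.swapEntries ha hb hab hrow.ne hcol.ne'
  have hUb : U b = T a := by simp [U, swapEntries_eq_comp, hab]
  have hUa : U a = U b + 1 := by simp [U, swapEntries_eq_comp, hab]
  refine ⟨U, hU, pairing_lt_pairing_swapEntries hT.1 ha hb hab
    (Scol_lt_Scol hb ha (Prod.Lex.toLex_lt_toLex.2 (Or.inl hcol))), ?_⟩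
  have := rsStep_swapEntries hU.1 hb ha hUa hrow
  rwa [hUb, swapEntries_swapEntries] at this

lemma exists_RSStep_of_ne_Srow (hT : IsSET α T) (hne : T ≠ Srow α) :
    ∃ U, IsSET α U ∧ pairing α (Srow α) T < pairing α (Srow α) U ∧ RSStep α T U := by
  obtain ⟨a, b, ha, hb, hab, hrow⟩ :
      ∃ a b, IsCell α a ∧ IsCell α b ∧ T b = T a + 1 ∧ b.1 < a.1 := by
    by_contra! h
    exact hne (hT.eq_Srow_of_forall_succ h)
  exact ⟨_, hT.swapEntries_of_fst_lt ha hb hab hrow, pairing_lt_pairing_swapEntries hT.1 ha hb hab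
    (Srow_lt_Srow hb ha (Prod.Lex.toLex_lt_toLex.2 (Or.inl hrow))),
    rsStep_swapEntries hT.1 ha hb hab hrow⟩

lemma reflTransGen_Scol (hT : IsSET α T) : ReflTransGen (RSStep α) (Scol α) T :=
  reflTransGen_of_bounded_potential (pairing α (Scol α)) _ (fun _ hU => pairing_le hU.1 _)
    (fun _ hU hne => hU.exists_RSStep_of_ne_Scol hne) hT

lemma reflTransGen_Srow (hT : IsSET α T) : ReflTransGen (RSStep α) T (Srow α) :=
  reflTransGen_swap.1 <| reflTransGen_of_bounded_potential (pairing α (Srow α)) _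
    (fun _ hU => pairing_le hU.1 _) (fun _ hU hne => hU.exists_RSStep_of_ne_Srow hne) hT

end IsSET

theorem Scol_unique_minimal_of_SET (n : ℕ) (α : List ℕ) (hα : IsComposition α n) :
    IsSET α (Scol α) ∧
    (∀ T, IsSET α T → ∃ l : List ℕ, (∀ i ∈ l, 1 ≤ i ∧ i ≤ n - 1) ∧
      applySeqRS α l (some (Scol α)) = some T ∧
      (∀ k, k ≤ l.length → ∃ T', applySeqRS α (l.take k) (some (Scol α)) = some T' ∧
        IsSET α T')) ∧
    (∀ T, IsSIT α T → (IsSET α T ↔ (preRS α (Scol α) T ∧ preRS α T (Srow α)))) := by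
  obtain ⟨-, rfl⟩ := hα
  have hScol := isSET_Scol α
  refine ⟨hScol, fun T hT => ?_, fun T _ => ⟨fun hT => ?_, ?_⟩⟩
  · obtain ⟨l, hl, h⟩ := preRS_of_reflTransGen hT.reflTransGen_Scol
    refine ⟨l, hl, h, fun k _ => ?_⟩
    obtain ⟨T', hT'⟩ := applySeqRS_take_eq_some h k
    exact ⟨T', hT', hScol.of_applySeqRS (fun i hi => hl i (List.mem_of_mem_take hi)) hT'⟩
  · exact ⟨preRS_of_reflTransGen hT.reflTransGen_Scol,
      preRS_of_reflTransGen hT.reflTransGen_Srow⟩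
  · rintro ⟨⟨l, hl, h⟩, -⟩
    exact hScol.of_applySeqRS hl h

end ImmHecke
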